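/- arXiv:2403.05829 — 3 statements merged into one kernel-verified Lean document; each statement's English description precedes it below -/
import Mathlib

section
/- (Proposition 3: signed distance to an H-determined set can be computed with the H-restricted distance.) Let H ⊆ V and let A be an H-determined set of states. Then for every state σ, SDist(σ, A) = SDist_H(σ, A). Consequently, for every set B of states, inf{SDist(σ, A) | σ ∈ B} = inf{SDist_H(σ, A) | σ ∈ B}. -/
open scoped BigOperators Classical

variable {V : Type*} [Fintype V]

/-- Euclidean distance between states restricted to the variables in `H`. -/
noncomputable def distH (H : Finset V) (σ σ' : V → ℝ) : ℝ :=
  Real.sqrt (∑ x ∈ H, (σ x - σ' x) ^ 2)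

/-- Signed distance of a state to a set of states with respect to a
distance function `δ`, valued in ℝ ∪ {−∞, +∞}. -/
noncomputable def SDistGen (δ : (V → ℝ) → (V → ℝ) → ℝ)
    (σ : V → ℝ) (A : Set (V → ℝ)) : EReal :=
  if σ ∈ A then sInf ((fun σ' => ((δ σ σ' : ℝ) : EReal)) '' Aᶜ)
  else - sInf ((fun σ' => ((δ σ σ' : ℝ) : EReal)) '' A)

/-!
Restricting the distance to `H` can only shrink it, so the infima taken with `d_H` are no larger.
Conversely, given a competitor `σ'`, the state that copies `σ'` on `H` and `σ` elsewhere lies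
in the same `H`-determined set and its full distance to `σ` is exactly `d_H(σ, σ')`.
-/

section Determined

omit [Fintype V]

def IsDeterminedBy {α : Type*} (H : Finset V) (S : Set (V → α)) : Prop :=
  ∀ σ σ' : V → α, (∀ x ∈ H, σ x = σ' x) → (σ ∈ S ↔ σ' ∈ S)

theorem IsDeterminedBy.compl {α : Type*} {H : Finset V} {S : Set (V → α)}
    (hS : IsDeterminedBy H S) : IsDeterminedBy H Sᶜ :=
  fun σ σ' h => not_congr (hS σ σ' h)

variable {H K : Finset V}

theorem distH_mono (hHK : H ⊆ K) (σ σ' : V → ℝ) : distH H σ σ' ≤ distH K σ σ' :=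
  Real.sqrt_le_sqrt <|
    Finset.sum_le_sum_of_subset_of_nonneg hHK fun _ _ _ => sq_nonneg _

theorem distH_piecewise (hHK : H ⊆ K) (σ σ' : V → ℝ) :
    distH K σ (H.piecewise σ' σ) = distH H σ σ' := by
  unfold distH
  congr 1
  rw [← Finset.sum_subset hHK fun x _ hx => by simp [hx]]
  exact Finset.sum_congr rfl fun x hx => by simp [hx]

theorem sInf_distH_image_eq_of_isDeterminedBy (hHK : H ⊆ K) {S : Set (V → ℝ)}
    (hS : IsDeterminedBy H S) (σ : V → ℝ) :
    sInf ((fun σ' => ((distH K σ σ' : ℝ) : EReal)) '' S)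
      = sInf ((fun σ' => ((distH H σ σ' : ℝ) : EReal)) '' S) := by
  apply le_antisymm
  · refine sInf_le_sInf_of_isCoinitialFor ?_
    rintro _ ⟨σ', hσ', rfl⟩
    have hpatch : H.piecewise σ' σ ∈ S :=
      (hS _ σ' fun x hx => Finset.piecewise_eq_of_mem _ _ _ hx).mpr hσ'
    exact ⟨_, ⟨_, hpatch, rfl⟩, EReal.coe_le_coe_iff.mpr (distH_piecewise hHK σ σ').le⟩
  · refine sInf_le_sInf_of_isCoinitialFor ?_
    rintro _ ⟨σ', hσ', rfl⟩
    exact ⟨_, ⟨σ', hσ', rfl⟩, EReal.coe_le_coe_iff.mpr (distH_mono hHK σ σ')⟩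

theorem SDistGen_distH_eq_of_isDeterminedBy (hHK : H ⊆ K) {A : Set (V → ℝ)}
    (hA : IsDeterminedBy H A) (σ : V → ℝ) :
    SDistGen (distH K) σ A = SDistGen (distH H) σ A := by
  unfold SDistGen
  split_ifs
  · exact sInf_distH_image_eq_of_isDeterminedBy hHK hA.compl σ
  · rw [sInf_distH_image_eq_of_isDeterminedBy hHK hA σ]

end Determined

theorem signed_distance_H_determined
    (H : Finset V) (A : Set (V → ℝ))
    (hdet : ∀ σ σ' : V → ℝ, (∀ x ∈ H, σ x = σ' x) → (σ ∈ A ↔ σ' ∈ A)) :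
    (∀ σ : V → ℝ,
      SDistGen (distH (Finset.univ : Finset V)) σ A = SDistGen (distH H) σ A) ∧
    (∀ B : Set (V → ℝ),
      sInf ((fun σ => SDistGen (distH (Finset.univ : Finset V)) σ A) '' B)
        = sInf ((fun σ => SDistGen (distH H) σ A) '' B)) := by
  have hSDist : (fun σ => SDistGen (distH (Finset.univ : Finset V)) σ A)
      = fun σ => SDistGen (distH H) σ A :=
    funext <| SDistGen_distH_eq_of_isDeterminedBy (Finset.subset_univ H) hdet
  exact ⟨congrFun hSDist, fun B => by rw [hSDist]⟩
end

section
/- (Semantic soundness of the D-modality encoding of forward simulation distance, Theorem on forward proof-calculus soundness.) Let Pre be a set of states, let R_att and R be binary relations on states (the semantics of the attacked and of the original program), let H ⊆ V, dd ≥ 0, and let Ψ and Φ be binary relations on states (the semantics, on pairs of a state and its renamed copy, of dL formulas). Assume: (i) for every σ₁ ∈ Pre there exists σ₂ ∈ Pre with (σ₁, σ₂) ∈ Ψ; (ii) for all (σ₁, σ₂) ∈ Ψ and every ν₁ with (σ₁, ν₁) ∈ R_att, there exists ν₂ with (σ₂, ν₂) ∈ R and (ν₁, ν₂) ∈ Φ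 (validity of the D-modality formula); (iii) (ν₁, ν₂) ∈ Φ implies d_H(ν₁, ν₂) ≤ dd. Then R_att and R are at forward simulation distance dd with respect to Pre and H: for every ν₁ ∈ SP(R_att, Pre) there exists ν₂ ∈ SP(R, Pre) with d_H(ν₁, ν₂) ≤ dd. -/
open scoped BigOperators

variable {V : Type*} [Fintype V]

/-- Strongest postcondition of a relation with respect to a precondition. -/
def SP (R : (V → ℝ) → (V → ℝ) → Prop) (A : Set (V → ℝ)) : Set (V → ℝ) :=
  {ν | ∃ σ ∈ A, R σ ν}

theorem D_modality_sound_for_forward_simulation_distance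
    (H : Finset V) (Pre : Set (V → ℝ))
    (R Ratt Ψ Φ : (V → ℝ) → (V → ℝ) → Prop)
    (dd : ℝ) (hdd : 0 ≤ dd)
    (h1 : ∀ σ₁ ∈ Pre, ∃ σ₂ ∈ Pre, Ψ σ₁ σ₂)
    (h2 : ∀ σ₁ σ₂, Ψ σ₁ σ₂ → ∀ ν₁, Ratt σ₁ ν₁ → ∃ ν₂, R σ₂ ν₂ ∧ Φ ν₁ ν₂)
    (h3 : ∀ ν₁ ν₂, Φ ν₁ ν₂ → distH H ν₁ ν₂ ≤ dd) :
    ∀ ν₁ ∈ SP Ratt Pre, ∃ ν₂ ∈ SP R Pre, distH H ν₁ ν₂ ≤ dd := by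
  rintro ν₁ ⟨σ₁, hσ₁, hR⟩
  obtain ⟨σ₂, hσ₂, hΨ⟩ := h1 σ₁ hσ₁
  obtain ⟨ν₂, hRν, hΦ⟩ := h2 σ₁ σ₂ hΨ ν₁ hR
  exact ⟨ν₂, ⟨σ₂, hσ₂, hRν⟩, h3 ν₁ ν₂ hΦ⟩
end

section
/- (Semantic soundness of the D-modality encoding of backward simulation distance, Theorem on backward proof-calculus soundness.) Let Post be a set of states, let R_att and R be binary relations on states (the semantics of the attacked and of the original program), let H ⊆ V, dd ≥ 0, and let Ψ be a binary relation on states (the semantics, on pairs of a state and its renamed copy, of a dL formula). Assume: (i) for every state σ₁ there exists a state σ₂ with (σ₁, σ₂) ∈ Ψ; (ii) (σ₁, σ₂) ∈ Ψ implies d_H(σ₁, σ₂) ≤ dd; (iii) for all (σ₁, σ₂) ∈ Ψ and every ν₁ with (σ₁, ν₁) ∈ R_att, there exists ν₂ with (σ₂, ν₂) ∈ R such that if ν₁ ∉ Post then ν₂ ∉ Post (validity of the D-modality formula). Then R_att and R are at backward simulation distance dd with respect to Post and H: for every state σ₁ from which R_att can reach a state outside Post (∃ν₁ ∉ Post with (σ₁,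 ν₁) ∈ R_att) there exists a state σ₂ from which R can reach a state outside Post (∃ν₂ ∉ Post with (σ₂, ν₂) ∈ R) such that d_H(σ₁, σ₂) ≤ dd. -/
open scoped BigOperators

variable {V : Type*} [Fintype V]

theorem D_modality_sound_for_backward_simulation_distance
    (H : Finset V) (Post : Set (V → ℝ))
    (R Ratt Ψ : (V → ℝ) → (V → ℝ) → Prop)
    (dd : ℝ) (hdd : 0 ≤ dd)
    (h1 : ∀ σ₁ : V → ℝ, ∃ σ₂ : V → ℝ, Ψ σ₁ σ₂)
    (h2 : ∀ σ₁ σ₂, Ψ σ₁ σ₂ → distH H σ₁ σ₂ ≤ dd)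
    (h3 : ∀ σ₁ σ₂, Ψ σ₁ σ₂ → ∀ ν₁, Ratt σ₁ ν₁ →
      ∃ ν₂, R σ₂ ν₂ ∧ (ν₁ ∉ Post → ν₂ ∉ Post)) :
    ∀ σ₁ : V → ℝ, (∃ ν₁ ∉ Post, Ratt σ₁ ν₁) →
      ∃ σ₂ : V → ℝ, (∃ ν₂ ∉ Post, R σ₂ ν₂) ∧ distH H σ₁ σ₂ ≤ dd := by
  rintro σ₁ ⟨ν₁, hν₁, hR⟩
  obtain ⟨σ₂, hΨ⟩ := h1 σ₁
  obtain ⟨ν₂, hR₂, hp⟩ := h3 σ₁ σ₂ hΨ ν₁ hR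
  exact ⟨σ₂, ⟨ν₂, hp hν₁, hR₂⟩, h2 σ₁ σ₂ hΨ⟩
end
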